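/- arXiv:2108.00018 — 2 statements merged into one kernel-verified Lean document; each statement's English description precedes it below -/
import Mathlib

section
/- For all odd integers p > q ≥ 1 and every integer n ≥ 2, the cross-section of the fractal cube by the central hyperplane satisfies { x ∈ FC⁽ⁿ⁾(p,q) : xₙ = 1/2 } = { (y, 1/2) : y ∈ FC⁽ⁿ⁻¹⁾(p,q) }. (In particular, for n = 3 the minimal-area cross-section membrane of the fractal cube FC(p,q) is the generalized Sierpiński carpet SC(p,q).) -/
open Set

/-- The digit set `D` of the fractal cube construction: tuples `a ∈ {0,…,p−1}ⁿ` that do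
not lie in the central block `{m,…,m+q−1}ⁿ`, where `m = (p−q)/2`. -/
def digitSet (n p q : ℕ) : Set (Fin n → ℕ) :=
  {a | (∀ i, a i < p) ∧ ¬ ∀ i, (p - q) / 2 ≤ a i ∧ a i ≤ (p - q) / 2 + q - 1}

/-- The contracting similarity `x ↦ (x + a) / p` of `ℝⁿ`. -/
noncomputable def simMap (n p : ℕ) (a : Fin n → ℕ) (x : EuclideanSpace ℝ (Fin n)) :
    EuclideanSpace ℝ (Fin n) :=
  WithLp.toLp 2 (fun i => (x i + a i) / p)

/-- The level-`l` regions `Ωₗ` of the fractal cube construction: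
`Ω₀ = [0,1]ⁿ` and `Ω_{l+1} = ⋃_{a ∈ D} p⁻¹ · (a + Ωₗ)`. -/
noncomputable def levelRegion (n p q : ℕ) : ℕ → Set (EuclideanSpace ℝ (Fin n))
  | 0 => {x | ∀ i, x i ∈ Icc (0 : ℝ) 1}
  | l + 1 => ⋃ a ∈ digitSet n p q, simMap n p a '' levelRegion n p q l

/-- The fractal cube `FC⁽ⁿ⁾(p,q) = ⋂_l Ωₗ`. -/
noncomputable def fractalCube (n p q : ℕ) : Set (EuclideanSpace ℝ (Fin n)) :=
  ⋂ l, levelRegion n p q l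

/-!
Write `p = 2k + 1`. A point `(z + a) / p` with `zₙ ∈ [0, 1]` has last coordinate `1/2` only
when `aₙ = k` and `zₙ = 1/2`. Since `k` lies in the central block
`{(p-q)/2, …, (p-q)/2 + q - 1}`, the digit `(a', k)` is admissible exactly when `a'` is
admissible in dimension `n - 1`. Hence, by induction on `l`, the section of `Ωₗ⁽ⁿ⁾` by
`xₙ = 1/2` is `Ωₗ⁽ⁿ⁻¹⁾ × {1/2}`, and intersecting over `l` gives the theorem.
-/

noncomputable def euclideanSnoc {m : ℕ} (y : EuclideanSpace ℝ (Fin m)) (t : ℝ) :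
    EuclideanSpace ℝ (Fin (m + 1)) :=
  WithLp.toLp 2 (Fin.snoc (α := fun _ => ℝ) y.ofLp t)

section EuclideanSnoc

variable {m : ℕ}

@[simp]
lemma euclideanSnoc_apply_castSucc (y : EuclideanSpace ℝ (Fin m)) (t : ℝ) (i : Fin m) :
    euclideanSnoc y t i.castSucc = y i := by
  simp [euclideanSnoc]

@[simp]
lemma euclideanSnoc_apply_last (y : EuclideanSpace ℝ (Fin m)) (t : ℝ) :
    euclideanSnoc y t (Fin.last m) = t := by
  simp [euclideanSnoc]

lemma euclideanSnoc_inj {y y' : EuclideanSpace ℝ (Fin m)} {t t' : ℝ} :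
    euclideanSnoc y t = euclideanSnoc y' t' ↔ y = y' ∧ t = t' := by
  rw [euclideanSnoc, euclideanSnoc, (WithLp.toLp_injective 2).eq_iff, Fin.snoc_inj,
    (WithLp.ofLp_injective 2).eq_iff]

lemma exists_euclideanSnoc_eq (x : EuclideanSpace ℝ (Fin (m + 1))) :
    ∃ y t, euclideanSnoc y t = x :=
  ⟨WithLp.toLp 2 (Fin.init x.ofLp), x (Fin.last m), by simp [euclideanSnoc, Fin.snoc_init_self]⟩

lemma simMap_snoc_euclideanSnoc (p : ℕ) (a : Fin m → ℕ) (c : ℕ)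
    (y : EuclideanSpace ℝ (Fin m)) (t : ℝ) :
    simMap (m + 1) p (Fin.snoc a c) (euclideanSnoc y t) =
      euclideanSnoc (simMap m p a y) ((t + c) / p) := by
  ext i
  refine Fin.lastCases ?_ (fun i => ?_) i <;> simp [simMap]

end EuclideanSnoc

lemma simMap_mem_levelRegion_zero {n p q : ℕ} (hp : 0 < p) {a : Fin n → ℕ} (ha : ∀ i, a i < p)
    {x : EuclideanSpace ℝ (Fin n)} (hx : x ∈ levelRegion n p q 0) :
    simMap n p a x ∈ levelRegion n p q 0 := by
  intro i
  have hpR : (0 : ℝ) < p := by exact_mod_cast hp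
  have hai : (a i : ℝ) + 1 ≤ p := by exact_mod_cast ha i
  obtain ⟨hx0, hx1⟩ := hx i
  exact ⟨by simp only [simMap]; positivity, by simp only [simMap]; rw [div_le_one hpR]; linarith⟩

lemma levelRegion_subset_levelRegion_zero {n p q : ℕ} (hp : 0 < p) (l : ℕ) :
    levelRegion n p q l ⊆ levelRegion n p q 0 := by
  induction l with
  | zero => exact subset_rfl
  | succ l ih =>
    simp only [levelRegion, iUnion_subset_iff, image_subset_iff]
    exact fun a ha x hx => simMap_mem_levelRegion_zero hp ha.1 (ih hx)

lemma add_natCast_div_eq_half_iff {p c : ℕ} (hp : Odd p) {t : ℝ} (ht : t ∈ Icc (0 : ℝ) 1) :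
    (t + c) / p = 1 / 2 ↔ c = p / 2 ∧ t = 1 / 2 := by
  obtain ⟨k, rfl⟩ := hp
  rw [show (2 * k + 1) / 2 = k by omega, div_eq_div_iff (by positivity) two_ne_zero]
  push_cast
  constructor
  · intro h
    have hc : c = k := by
      have hlt : c < k + 1 := by exact_mod_cast (by linarith [ht.1] : (c : ℝ) < k + 1)
      have hgt : k < c + 1 := by exact_mod_cast (by linarith [ht.2] : (k : ℝ) < c + 1)
      omega
    subst hc
    exact ⟨rfl, by linarith⟩
  · rintro ⟨rfl, rfl⟩
    ring

lemma snoc_mem_digitSet_iff {m p q : ℕ} (hp : Odd p) (hq : 1 ≤ q) (a : Fin m → ℕ) :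
    Fin.snoc a (p / 2) ∈ digitSet (m + 1) p q ↔ a ∈ digitSet m p q := by
  obtain ⟨k, rfl⟩ := hp
  have hmid_lo : (2 * k + 1 - q) / 2 ≤ k := by omega
  have hmid_hi : k ≤ (2 * k + 1 - q) / 2 + q - 1 := by omega
  simp only [digitSet, mem_ofPred_eq, Fin.forall_fin_succ', Fin.snoc_castSucc, Fin.snoc_last,
    show (2 * k + 1) / 2 = k by omega, show k < 2 * k + 1 by omega, hmid_lo, hmid_hi, and_true]

lemma euclideanSnoc_half_mem_levelRegion_iff {m p q : ℕ} (hp : Odd p) (hq : 1 ≤ q) (l : ℕ)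
    {y : EuclideanSpace ℝ (Fin m)} :
    euclideanSnoc y (1 / 2) ∈ levelRegion (m + 1) p q l ↔ y ∈ levelRegion m p q l := by
  induction l generalizing y with
  | zero =>
    simp only [levelRegion, mem_ofPred_eq, Fin.forall_fin_succ', euclideanSnoc_apply_castSucc,
      euclideanSnoc_apply_last]
    norm_num
  | succ l ih =>
    simp only [levelRegion, mem_iUnion, mem_image, exists_prop]
    constructor
    · rintro ⟨a, ha, z, hz, hzy⟩
      obtain ⟨a', c, rfl⟩ : ∃ a' c, Fin.snoc a' c = a := ⟨Fin.init a, _, Fin.snoc_init_self a⟩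
      obtain ⟨z', t, rfl⟩ := exists_euclideanSnoc_eq z
      have ht : t ∈ Icc (0 : ℝ) 1 := by
        simpa using levelRegion_subset_levelRegion_zero hp.pos l hz (Fin.last m)
      rw [simMap_snoc_euclideanSnoc, euclideanSnoc_inj, add_natCast_div_eq_half_iff hp ht] at hzy
      obtain ⟨rfl, rfl, rfl⟩ := hzy
      exact ⟨a', (snoc_mem_digitSet_iff hp hq a').1 ha, z', ih.1 hz, rfl⟩
    · rintro ⟨a', ha', z', hz', rfl⟩
      refine ⟨Fin.snoc a' (p / 2), (snoc_mem_digitSet_iff hp hq a').2 ha',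
        euclideanSnoc z' (1 / 2), ih.2 hz', ?_⟩
      rw [simMap_snoc_euclideanSnoc, euclideanSnoc_inj,
        add_natCast_div_eq_half_iff hp ⟨by norm_num, by norm_num⟩]
      exact ⟨rfl, rfl, rfl⟩

lemma euclideanSnoc_half_mem_fractalCube_iff {m p q : ℕ} (hp : Odd p) (hq : 1 ≤ q)
    {y : EuclideanSpace ℝ (Fin m)} :
    euclideanSnoc y (1 / 2) ∈ fractalCube (m + 1) p q ↔ y ∈ fractalCube m p q := by
  simp only [fractalCube, mem_iInter, euclideanSnoc_half_mem_levelRegion_iff hp hq]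

theorem fractalCube_central_section_general (m p q : ℕ) (hp : Odd p) (hq : 1 ≤ q) :
    {x : EuclideanSpace ℝ (Fin (m + 1)) |
        x ∈ fractalCube (m + 1) p q ∧ x (Fin.last m) = 1 / 2} =
      (fun y : EuclideanSpace ℝ (Fin m) =>
          (WithLp.toLp 2 (Fin.snoc (α := fun _ => ℝ) y.ofLp (1 / 2)) : EuclideanSpace ℝ (Fin (m + 1)))) ''
        fractalCube m p q := by
  ext x
  constructor
  · rintro ⟨hx, hlast⟩
    obtain ⟨y, t, rfl⟩ := exists_euclideanSnoc_eq x
    rw [euclideanSnoc_apply_last] at hlast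
    subst hlast
    exact ⟨y, (euclideanSnoc_half_mem_fractalCube_iff hp hq).1 hx, rfl⟩
  · rintro ⟨y, hy, rfl⟩
    exact ⟨(euclideanSnoc_half_mem_fractalCube_iff hp hq).2 hy, euclideanSnoc_apply_last y _⟩

/-- For all odd integers `p > q ≥ 1` and every integer `n = m + 1 ≥ 2`,
the cross-section of the fractal cube by the central hyperplane satisfies
`{x ∈ FC⁽ⁿ⁾(p,q) : xₙ = 1/2} = {(y, 1/2) : y ∈ FC⁽ⁿ⁻¹⁾(p,q)}`. -/
theorem fractalCube_central_section (m p q : ℕ) (hm : 1 ≤ m) (hp : Odd p) (hqo : Odd q)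
    (hq : 1 ≤ q) (hpq : q < p) :
    {x : EuclideanSpace ℝ (Fin (m + 1)) |
        x ∈ fractalCube (m + 1) p q ∧ x (Fin.last m) = 1 / 2} =
      (fun y : EuclideanSpace ℝ (Fin m) =>
          (WithLp.toLp 2 (Fin.snoc (α := fun _ => ℝ) y.ofLp (1 / 2)) : EuclideanSpace ℝ (Fin (m + 1)))) ''
        fractalCube m p q :=
  fractalCube_central_section_general m p q hp hq
end

section
/- Let p > q ≥ 1 be odd integers. For every t ∈ (0,1) such that (t, 1/2) ∈ SC(p,q), and for every ε > 0, there exist s₁ ∈ (t − ε, t) ∩ (0,1) and s₂ ∈ (t, t + ε) ∩ (0,1) such that (s₁, 1/2) ∉ SC(p,q) and (s₂, 1/2) ∉ SC(p,q). (Geometric core of the 2D no-go theorem: any logical string crossing the carpet at mid-height passes arbitrarily close to removed holes on both sides, so the carpet supports only O(1)-length dual strings there.) -/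
open Set

/-- The generalized Sierpiński carpet `SC(p,q) := FC⁽²⁾(p,q) ⊆ ℝ²`. -/
noncomputable def sierpinskiCarpet (p q : ℕ) : Set (EuclideanSpace ℝ (Fin 2)) :=
  fractalCube 2 p q

/-!
On the midline the vertical digit is forced to be the centre digit `p / 2` (as `p` is odd), and
the centre digit is in the central block (as `q` is odd), so the horizontal digit differs from
`p / 2` and the horizontal coordinate evolves by `s ↦ p * s - a` with `a ≠ p / 2`. Hence the
midline centres of level-`l` squares, the points `(s, 1/2)` with `p ^ l * s ∈ ℤ + 1/2`, are missing
from `Ω_{l+1}`. These centres are `p ^ (-l)`-dense, which gives holes on both sides of every `t`.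
-/

variable {p q : ℕ}

noncomputable abbrev midline (s : ℝ) : EuclideanSpace ℝ (Fin 2) :=
  WithLp.toLp 2 ![s, 1 / 2]

lemma levelRegion_apply_mem_Icc {n l : ℕ} {x : EuclideanSpace ℝ (Fin n)}
    (hx : x ∈ levelRegion n p q l) (i : Fin n) : x i ∈ Icc (0 : ℝ) 1 := by
  induction l generalizing x with
  | zero => exact hx i
  | succ l ih =>
    simp only [levelRegion, mem_iUnion, mem_image, exists_prop] at hx
    obtain ⟨a, ha, w, hw, rfl⟩ := hx
    have hap : (a i : ℝ) + 1 ≤ p := by exact_mod_cast ha.1 i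
    have hp : (0 : ℝ) < p := by linarith [(a i).cast_nonneg (α := ℝ)]
    obtain ⟨hw0, hw1⟩ := ih hw
    refine ⟨by simp only [simMap]; positivity, ?_⟩
    simp only [simMap]
    rw [div_le_one hp]
    linarith

lemma eq_div_two_of_add_div_eq_half (hp : Odd p) {w : ℝ} (hw : w ∈ Icc 0 1) {a : ℕ}
    (h : (w + a) / p = 1 / 2) : a = p / 2 ∧ w = 1 / 2 := by
  obtain ⟨k, rfl⟩ := hp
  have hk : w + a = k + 1 / 2 := by
    field_simp at h
    push_cast at h
    linarith
  have hak : a = k := by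
    have h1 : (a : ℝ) < k + 1 := by linarith [hw.1]
    have h2 : (k : ℝ) < a + 1 := by linarith [hw.2]
    have : a < k + 1 := by exact_mod_cast h1
    have : k < a + 1 := by exact_mod_cast h2
    omega
  subst hak
  exact ⟨by omega, by linarith⟩

lemma const_div_two_not_mem_digitSet (n : ℕ) (hp : Odd p) (hq : Odd q) :
    (fun _ => p / 2) ∉ digitSet n p q := by
  rintro ⟨-, hnot⟩
  obtain ⟨k, rfl⟩ := hp
  obtain ⟨j, rfl⟩ := hq
  exact hnot fun _ => by dsimp only; omega

lemma exists_digit_of_midline_mem_levelRegion_succ (hp : Odd p) (hq : Odd q) {l : ℕ} {s : ℝ}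
    (hs : midline s ∈ levelRegion 2 p q (l + 1)) :
    ∃ (a : ℕ) (w : ℝ), a ≠ p / 2 ∧ midline w ∈ levelRegion 2 p q l ∧ s = (w + a) / p := by
  simp only [levelRegion, mem_iUnion, mem_image, exists_prop] at hs
  obtain ⟨a, ha, w, hw, heq⟩ := hs
  have h0 : (w 0 + a 0) / p = s := by simpa [simMap] using congrArg (· 0) heq
  have h1 : (w 1 + a 1) / p = 1 / 2 := by simpa [simMap] using congrArg (· 1) heq
  obtain ⟨ha1, hw1⟩ := eq_div_two_of_add_div_eq_half hp (levelRegion_apply_mem_Icc hw 1) h1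
  refine ⟨a 0, w 0, fun ha0 => const_div_two_not_mem_digitSet 2 hp hq ?_, ?_, h0.symm⟩
  · convert ha using 1
    funext i
    fin_cases i <;> simp [ha0, ha1]
  · convert hw
    ext i
    fin_cases i <;> simp [hw1]

lemma midline_not_mem_levelRegion_succ (hp : Odd p) (hq : Odd q) (l : ℕ) {s : ℝ} {i : ℤ}
    (h : (p : ℝ) ^ l * s = i + 1 / 2) : midline s ∉ levelRegion 2 p q (l + 1) := by
  have hp0 : (p : ℝ) ≠ 0 := by exact_mod_cast hp.pos.ne'
  induction l generalizing s i with
  | zero =>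
    intro hs
    have hs01 : s ∈ Icc (0 : ℝ) 1 := by simpa using levelRegion_apply_mem_Icc hs 0
    obtain ⟨a, w, ha, hw, rfl⟩ := exists_digit_of_midline_mem_levelRegion_succ hp hq hs
    rw [pow_zero, one_mul] at h
    have hi : i = 0 := by
      have h1 : (i : ℝ) < 1 := by linarith [hs01.2]
      have h2 : (-1 : ℝ) < i := by linarith [hs01.1]
      have : i < 1 := by exact_mod_cast h1
      have : -1 < i := by exact_mod_cast h2
      omega
    subst hi
    have hw01 : w ∈ Icc (0 : ℝ) 1 := by simpa using levelRegion_apply_mem_Icc hw 0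
    exact ha (eq_div_two_of_add_div_eq_half hp hw01 (by simpa using h)).1
  | succ l ih =>
    intro hs
    obtain ⟨a, w, -, hw, rfl⟩ := exists_digit_of_midline_mem_levelRegion_succ hp hq hs
    refine ih (i := i - (p ^ l * a : ℕ)) ?_ hw
    rw [pow_succ, mul_assoc, mul_div_cancel₀ _ hp0] at h
    push_cast
    linear_combination h

lemma midline_not_mem_sierpinskiCarpet (hp : Odd p) (hq : Odd q) (l : ℕ) {s : ℝ} {i : ℤ}
    (h : (p : ℝ) ^ l * s = i + 1 / 2) : midline s ∉ sierpinskiCarpet p q :=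
  fun hs => midline_not_mem_levelRegion_succ hp hq l h (mem_iInter.mp hs (l + 1))

lemma exists_mul_eq_intCast_add_mem_Ioo {N a b : ℝ} (hN : 0 < N) (hab : 1 < N * (b - a))
    (c : ℝ) : ∃ s ∈ Ioo a b, ∃ i : ℤ, N * s = i + c := by
  set i := ⌊N * a - c⌋ + 1
  have h1 : N * a < i + c := by
    have := Int.lt_floor_add_one (N * a - c)
    push_cast [i]
    linarith
  have h2 : (i : ℝ) + c < N * b := by
    have := Int.floor_le (N * a - c)
    push_cast [i]
    linarith
  refine ⟨(i + c) / N, ⟨?_, ?_⟩, i, mul_div_cancel₀ _ hN.ne'⟩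
  · rw [lt_div_iff₀ hN]
    linarith
  · rw [div_lt_iff₀ hN]
    linarith

theorem sierpinskiCarpet_midline_holes_general (p q : ℕ) (hp : Odd p) (hqo : Odd q)
    (hpq : q < p) :
    ∀ t ∈ Ioo (0 : ℝ) 1,
      (WithLp.toLp 2 ![t, 1 / 2] : EuclideanSpace ℝ (Fin 2)) ∈ sierpinskiCarpet p q →
      ∀ ε > (0 : ℝ),
        (∃ s₁ ∈ Ioo (t - ε) t ∩ Ioo (0 : ℝ) 1,
            (WithLp.toLp 2 ![s₁, 1 / 2] : EuclideanSpace ℝ (Fin 2)) ∉ sierpinskiCarpet p q) ∧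
        ∃ s₂ ∈ Ioo t (t + ε) ∩ Ioo (0 : ℝ) 1,
            (WithLp.toLp 2 ![s₂, 1 / 2] : EuclideanSpace ℝ (Fin 2)) ∉ sierpinskiCarpet p q := by
  intro t ⟨ht0, ht1⟩ _ ε hε
  set δ := min ε (min t (1 - t))
  have hδε : δ ≤ ε := min_le_left _ _
  have hδt : δ ≤ t := (min_le_right _ _).trans (min_le_left _ _)
  have hδt' : δ ≤ 1 - t := (min_le_right _ _).trans (min_le_right _ _)
  have hδ : 0 < δ := lt_min hε (lt_min ht0 (by linarith))
  have hp1 : (1 : ℝ) < p := Nat.one_lt_cast.mpr (lt_of_le_of_lt hqo.pos hpq)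
  obtain ⟨l, hl⟩ := pow_unbounded_of_one_lt (1 / δ) hp1
  have hN : 1 < (p : ℝ) ^ l * δ := by rwa [div_lt_iff₀ hδ] at hl
  have hP : 0 < (p : ℝ) ^ l := by positivity
  obtain ⟨s₁, ⟨hs₁, hs₁'⟩, i₁, hi₁⟩ :=
    exists_mul_eq_intCast_add_mem_Ioo hP (a := t - δ) (b := t) (by simpa using hN) (1 / 2)
  obtain ⟨s₂, ⟨hs₂, hs₂'⟩, i₂, hi₂⟩ :=
    exists_mul_eq_intCast_add_mem_Ioo hP (a := t) (b := t + δ) (by simpa using hN) (1 / 2)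
  exact ⟨⟨s₁, ⟨⟨by linarith, hs₁'⟩, by linarith, by linarith⟩,
      midline_not_mem_sierpinskiCarpet hp hqo l hi₁⟩,
    ⟨s₂, ⟨⟨hs₂, by linarith⟩, by linarith, by linarith⟩,
      midline_not_mem_sierpinskiCarpet hp hqo l hi₂⟩⟩

/-- Let `p > q ≥ 1` be odd integers. For every `t ∈ (0,1)` such that
`(t, 1/2) ∈ SC(p,q)` and every `ε > 0`, there exist `s₁ ∈ (t − ε, t) ∩ (0,1)` and
`s₂ ∈ (t, t + ε) ∩ (0,1)` with `(s₁, 1/2) ∉ SC(p,q)` and `(s₂, 1/2) ∉ SC(p,q)`. -/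
theorem sierpinskiCarpet_midline_holes (p q : ℕ) (hp : Odd p) (hqo : Odd q)
    (hq : 1 ≤ q) (hpq : q < p) :
    ∀ t ∈ Ioo (0 : ℝ) 1,
      (WithLp.toLp 2 ![t, 1 / 2] : EuclideanSpace ℝ (Fin 2)) ∈ sierpinskiCarpet p q →
      ∀ ε > (0 : ℝ),
        (∃ s₁ ∈ Ioo (t - ε) t ∩ Ioo (0 : ℝ) 1,
            (WithLp.toLp 2 ![s₁, 1 / 2] : EuclideanSpace ℝ (Fin 2)) ∉ sierpinskiCarpet p q) ∧
        ∃ s₂ ∈ Ioo t (t + ε) ∩ Ioo (0 : ℝ) 1,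
            (WithLp.toLp 2 ![s₂, 1 / 2] : EuclideanSpace ℝ (Fin 2)) ∉ sierpinskiCarpet p q :=
  sierpinskiCarpet_midline_holes_general p q hp hqo hpq
end
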